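/- arXiv:math/0506545 — 2 statements merged into one kernel-verified Lean document; each statement's English description precedes it below -/
import Mathlib

section
/- For every integer m ≥ 2 and every coloring Δ: [1, 5m-4] → {1,2}, there exist monochromatic m-sets X ≺ Y in [1, 5m-4] with 2(x_m - x_1) ≤ y_m - x_1. -/
/-- `x` is a monochromatic m-set (indexed 1..m) inside `S` under coloring `Δ`. -/
def IsMonoMSet (m : ℕ) (Δ : ℕ → ℕ) (S : Finset ℕ) (x : ℕ → ℕ) : Prop :=
  (∀ i j, 1 ≤ i → i < j → j ≤ m → x i < x j) ∧
  (∀ i, 1 ≤ i → i ≤ m → x i ∈ S) ∧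
  (∀ i, 1 ≤ i → i ≤ m → Δ (x i) = Δ (x 1))

/-- There exist monochromatic m-sets X ≺ Y in `S` with 2(x_m - x_1) ≤ y_m - x_1. -/
def HasGoodPair (m : ℕ) (Δ : ℕ → ℕ) (S : Finset ℕ) : Prop :=
  ∃ x y : ℕ → ℕ, IsMonoMSet m Δ S x ∧ IsMonoMSet m Δ S y ∧
    x m < y 1 ∧ 2 * (x m - x 1) ≤ y m - x 1

/-- `g m r` : least N such that every r-coloring of [1,N] has a good pair. -/
noncomputable def g (m r : ℕ) : ℕ :=
  sInf {N | ∀ Δ : ℕ → ℕ, (∀ z ∈ Finset.Icc 1 N, Δ z ∈ Finset.Icc 1 r) →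
    HasGoodPair m Δ (Finset.Icc 1 N)}

/-!
Pigeonhole gives a monochromatic `m`-set in each of the blocks `[1, 2m-1]` and `[3m-2, 5m-4]`.
Then `2 x_m - x_1 ≤ 2(2m-1) - 1 = 4m-3 = (3m-2) + (m-1) ≤ y_1 + (m-1) ≤ y_m`.
-/

open Finset

theorem Finset.exists_subset_card_eq_forall_eq_of_mul_lt_card {α β : Type*} [DecidableEq β]
    {I : Finset α} {C : Finset β} {Δ : α → β} {m : ℕ} (hm : 1 ≤ m)
    (hΔ : ∀ z ∈ I, Δ z ∈ C) (hI : #C * (m - 1) < #I) :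
    ∃ T ⊆ I, #T = m ∧ ∃ c, ∀ t ∈ T, Δ t = c := by
  obtain ⟨c, -, hc⟩ := exists_lt_card_fiber_of_mul_lt_card_of_maps_to hΔ hI
  obtain ⟨T, hT, hTm⟩ := exists_subset_card_eq (show m ≤ #{z ∈ I | Δ z = c} by omega)
  exact ⟨T, hT.trans (filter_subset _ _), hTm, c, fun t ht => (mem_filter.1 (hT ht)).2⟩

namespace IsMonoMSet

variable {m : ℕ} {Δ : ℕ → ℕ} {S : Finset ℕ} {x : ℕ → ℕ}

theorem mono {S' : Finset ℕ} (hx : IsMonoMSet m Δ S x) (hS : S ⊆ S') :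
    IsMonoMSet m Δ S' x :=
  ⟨hx.1, fun i hi him => hS (hx.2.1 i hi him), hx.2.2⟩

theorem add_sub_one_le (hx : IsMonoMSet m Δ S x) :
    ∀ j, 1 ≤ j → j ≤ m → x 1 + (j - 1) ≤ x j
  | 0, h, _ => absurd h (by omega)
  | 1, _, _ => le_rfl
  | j + 2, _, hj => by
    have ih := hx.add_sub_one_le (j + 1) (by omega) (by omega)
    have step := hx.1 (j + 1) (j + 2) (by omega) (by omega) hj
    omega

end IsMonoMSet

theorem exists_isMonoMSet_of_card_eq {m c : ℕ} {Δ : ℕ → ℕ} {T : Finset ℕ} (hT : #T = m)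
    (hΔ : ∀ t ∈ T, Δ t = c) : ∃ x, IsMonoMSet m Δ T x := by
  let f := T.orderEmbOfFin hT
  refine ⟨fun i => if h : i - 1 < m then f ⟨i - 1, h⟩ else 0, ?_, ?_, ?_⟩
  · intro i j hi hij hjm
    simp only [dif_pos (show i - 1 < m by omega), dif_pos (show j - 1 < m by omega)]
    exact f.strictMono (Fin.mk_lt_mk.2 (by omega))
  · intro i hi him
    simp only [dif_pos (show i - 1 < m by omega)]
    exact orderEmbOfFin_mem T hT _
  · intro i hi him
    simp only [dif_pos (show i - 1 < m by omega), dif_pos (show 1 - 1 < m by omega)]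
    rw [hΔ _ (orderEmbOfFin_mem T hT _), hΔ _ (orderEmbOfFin_mem T hT _)]

theorem exists_isMonoMSet_of_mul_lt_card {m : ℕ} {Δ : ℕ → ℕ} {I C : Finset ℕ} (hm : 1 ≤ m)
    (hΔ : ∀ z ∈ I, Δ z ∈ C) (hI : #C * (m - 1) < #I) : ∃ x, IsMonoMSet m Δ I x := by
  obtain ⟨T, hTI, hTm, c, hc⟩ := exists_subset_card_eq_forall_eq_of_mul_lt_card hm hΔ hI
  obtain ⟨x, hx⟩ := exists_isMonoMSet_of_card_eq hTm hc
  exact ⟨x, hx.mono hTI⟩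

theorem stmt6 (m : ℕ) (hm : 2 ≤ m) (Δ : ℕ → ℕ)
    (hΔ : ∀ z ∈ Finset.Icc 1 (5 * m - 4), Δ z ∈ Finset.Icc 1 2) :
    HasGoodPair m Δ (Finset.Icc 1 (5 * m - 4)) := by
  have hX : Icc 1 (2 * m - 1) ⊆ Icc 1 (5 * m - 4) := Icc_subset_Icc le_rfl (by omega)
  have hY : Icc (3 * m - 2) (5 * m - 4) ⊆ Icc 1 (5 * m - 4) := Icc_subset_Icc (by omega) le_rfl
  obtain ⟨x, hx⟩ := exists_isMonoMSet_of_mul_lt_card (m := m) (by omega)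
    (fun z hz => hΔ z (hX hz)) (by simp only [Nat.card_Icc]; omega)
  obtain ⟨y, hy⟩ := exists_isMonoMSet_of_mul_lt_card (m := m) (by omega)
    (fun z hz => hΔ z (hY hz)) (by simp only [Nat.card_Icc]; omega)
  have hx1 := mem_Icc.1 (hx.2.1 1 le_rfl (by omega))
  have hxm := mem_Icc.1 (hx.2.1 m (by omega) le_rfl)
  have hy1 := mem_Icc.1 (hy.2.1 1 le_rfl (by omega))
  have hym := hy.add_sub_one_le m (by omega) le_rfl
  exact ⟨x, y, hx.mono hX, hy.mono hY, by omega, by omega⟩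
end

section
/- Let m, r, k be positive integers with m ≥ 2, and let Δ: [1, g(m,r)-k] → [1,r] be a coloring. Let a = min over colors c of the m-th smallest element of Δ^{-1}(c) (assuming each color class has at least m elements; otherwise interpret appropriately), and for each color c set A_c = |Δ^{-1}(c) ∩ [1, a-1]| and B_c = |Δ^{-1}(c) ∩ [a+1, g(m,r)-k]|. If Σ_{c=1}^{r} (A_c + min{B_c, m-1}) ≤ r(2m-2) - k, then Δ is not an L(r)-coloring. -/
/-!
Suppose `Δ` has no good pair. Insert `k` new points into `[1, g - k]`: some right before the
first point of `X₀`, the first `m` points of the colour class of `a` (so `X₀` ends at `a`), the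
rest at the end. Colour them so that no colour gets `m` points before `a`, and every colour used at the end
keeps fewer than `m` points after `a`; the hypothesis on the sum says there is room
for `k` such points. The new colouring of `[1, g]` has a good pair `X ≺ Y`. Then `X` ends at or
after `a`, so `Y` lies after `a` and avoids the end block, i.e. `Y` is old. If `X` starts after the
inserted block it is old too, and `X ≺ Y` was already good; otherwise `X` is at least as spread
out as `X₀`, and `X₀ ≺ Y` was good.
-/

open Finset

namespace IsMonoMSet

variable {m : ℕ} {Δ : ℕ → ℕ} {S : Finset ℕ} {x : ℕ → ℕ}

lemma apply_le_apply (hx : IsMonoMSet m Δ S x) {i j : ℕ} (hi : 1 ≤ i) (hij : i ≤ j) (hj : j ≤ m) :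
    x i ≤ x j := by
  rcases hij.eq_or_lt with rfl | h
  · rfl
  · exact (hx.1 i j hi h hj).le

lemma le_card_filter (hx : IsMonoMSet m Δ S x) (P : ℕ → Prop) [DecidablePred P]
    (hP : ∀ i, 1 ≤ i → i ≤ m → P (x i)) : m ≤ #{w ∈ S | Δ w = Δ (x 1) ∧ P w} := by
  have hinj : Set.InjOn x (Icc 1 m) := by
    intro i hi j hj hij
    simp only [coe_Icc, Set.mem_Icc] at hi hj
    by_contra hne
    rcases Nat.lt_or_gt_of_ne hne with h | h
    · exact (hx.1 i j hi.1 h hj.2).ne hij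
    · exact (hx.1 j i hj.1 h hi.2).ne hij.symm
  calc m = #((Icc 1 m).image x) := by rw [card_image_of_injOn hinj, Nat.card_Icc]; omega
    _ ≤ _ := card_le_card fun w hw => by
      obtain ⟨i, hi, rfl⟩ := mem_image.1 hw
      obtain ⟨hi1, him⟩ := mem_Icc.1 hi
      exact mem_filter.2 ⟨hx.2.1 i hi1 him, hx.2.2 i hi1 him, hP i hi1 him⟩

end IsMonoMSet

lemma exists_isMonoMSet_of_card_eq_s16 {m c : ℕ} {Δ : ℕ → ℕ} {S W : Finset ℕ} (hWS : W ⊆ S)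
    (hWc : ∀ w ∈ W, Δ w = c) (hW : #W = m) :
    ∃ x, IsMonoMSet m Δ S x ∧ ∀ i, 1 ≤ i → i ≤ m → x i ∈ W := by
  set e := W.orderEmbOfFin hW
  let x : ℕ → ℕ := fun i => if h : i - 1 < m then e ⟨i - 1, h⟩ else 0
  have hxW : ∀ i, 1 ≤ i → i ≤ m → x i ∈ W := fun i _ hi => by
    simp only [x, dif_pos (show i - 1 < m by omega)]
    exact W.orderEmbOfFin_mem hW _
  refine ⟨x, ⟨fun i j hi hij hj => ?_, fun i hi hi' => hWS (hxW i hi hi'),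
    fun i hi hi' => by rw [hWc _ (hxW i hi hi'), hWc _ (hxW 1 le_rfl (hi.trans hi'))]⟩, hxW⟩
  simp only [x, dif_pos (show i - 1 < m by omega), dif_pos (show j - 1 < m by omega)]
  exact e.strictMono (Fin.mk_lt_mk.2 (by omega))

lemma exists_mem_card_filter_le_eq {α : Type*} [LinearOrder α] (T : Finset α) {m : ℕ}
    (hm : 1 ≤ m) (hmT : m ≤ #T) : ∃ b ∈ T, #{z ∈ T | z ≤ b} = m := by
  set e := T.orderEmbOfFin rfl
  set i : Fin #T := ⟨m - 1, by omega⟩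
  refine ⟨e i, T.orderEmbOfFin_mem rfl i, ?_⟩
  have : {z ∈ T | z ≤ e i} = (Iic i).map e.toEmbedding := by
    ext z
    simp only [mem_filter, mem_map, mem_Iic, RelEmbedding.coe_toEmbedding]
    constructor
    · rintro ⟨hz, hzi⟩
      obtain ⟨j, rfl⟩ : z ∈ Set.range e := by rwa [T.range_orderEmbOfFin]
      exact ⟨j, e.le_iff_le.1 hzi, rfl⟩
    · rintro ⟨j, hj, rfl⟩
      exact ⟨T.orderEmbOfFin_mem rfl j, e.le_iff_le.2 hj⟩
  rw [this, card_map, Fin.card_Iic]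
  exact Nat.sub_add_cancel hm

lemma card_filter_le_le_card_filter_le_pred_add_one (T : Finset ℕ) (a : ℕ) :
    #{z ∈ T | z ≤ a} ≤ #{z ∈ T | z ≤ a - 1} + 1 := by
  refine (card_le_card fun z hz => ?_).trans (card_insert_le a _)
  simp only [mem_filter, mem_insert] at hz ⊢
  rcases hz.2.eq_or_lt with h | h
  exacts [Or.inl h, Or.inr ⟨hz.1, by omega⟩]

lemma card_filter_lt_lt_of_forall_le {α : Type*} [LinearOrder α] {T : Finset α} {m : ℕ} {a : α}
    (hm : 1 ≤ m) (ha : ∀ b ∈ T, #{z ∈ T | z ≤ b} = m → a ≤ b) : #{z ∈ T | z < a} < m := by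
  by_contra! h
  obtain ⟨b, hb, hbm⟩ := exists_mem_card_filter_le_eq _ hm h
  rw [mem_filter] at hb
  have : {z ∈ T | z ≤ b} = {z ∈ {z ∈ T | z < a} | z ≤ b} := by
    rw [filter_filter]
    exact filter_congr fun z _ => ⟨fun hz => ⟨hz.trans_lt hb.2, hz⟩, And.right⟩
  exact (ha b hb.1 (this ▸ hbm)).not_gt hb.2

lemma exists_block_coloring {α : Type*} [DecidableEq α] [Inhabited α] (s : Finset α)
    (cap : α → ℕ) {k : ℕ} (hk : k ≤ ∑ c ∈ s, cap c) :
    ∃ β : ℕ → α, (∀ j < k, β j ∈ s) ∧ ∀ c, #{j ∈ range k | β j = c} ≤ cap c := by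
  induction s using Finset.induction_on generalizing k with
  | empty =>
    obtain rfl : k = 0 := by simpa using hk
    exact ⟨default, by simp, by simp⟩
  | @insert a s ha ih =>
    rw [sum_insert ha] at hk
    set k₀ := min k (cap a)
    obtain ⟨β, hβs, hβc⟩ := ih (k := k - k₀) (by omega)
    refine ⟨fun j => if j < k₀ then a else β (j - k₀), fun j hj => ?_, fun c => ?_⟩
    · dsimp only
      split_ifs
      · exact mem_insert_self a s
      · exact mem_insert_of_mem (hβs _ (by omega))
    by_cases hc : c = a
    · subst hc
      refine (card_le_card fun j hj => ?_).trans ((card_range k₀).trans_le (min_le_right _ _))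
      simp only [mem_filter, mem_range] at hj ⊢
      by_contra hjk
      rw [if_neg hjk] at hj
      exact ha (hj.2 ▸ hβs _ (by omega))
    · refine (card_le_card fun j hj => ?_).trans ((card_image_le (f := (· + k₀))).trans (hβc c))
      simp only [mem_filter, mem_range, mem_image] at hj ⊢
      split_ifs at hj with hjk
      · exact absurd hj.2.symm hc
      · exact ⟨j - k₀, ⟨by omega, hj.2⟩, by omega⟩

lemma exists_insertion_blocks {α : Type*} [DecidableEq α] [Inhabited α] (s : Finset α)
    (A B : α → ℕ) {M k : ℕ} (hA : ∀ c, A c ≤ M)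
    (hk : k + ∑ c ∈ s, (A c + min (B c) M) ≤ #s * (2 * M)) :
    ∃ (βL βT : ℕ → α) (kL kT : ℕ), kL + kT = k ∧ (∀ j < kL, βL j ∈ s) ∧ (∀ j < kT, βT j ∈ s) ∧
      (∀ c, A c + #{j ∈ range kL | βL j = c} ≤ M) ∧
      ∀ c, 0 < #{j ∈ range kT | βT j = c} → B c + #{j ∈ range kT | βT j = c} ≤ M := by
  -- Colour `c` gets at most `M - A c` points in the first block and at most `M - min (B c) M`
  -- in the second, which is `0` as soon as `B c ≥ M`.
  have hcap : ∑ c ∈ s, (M - A c) + ∑ c ∈ s, (M - min (B c) M) + ∑ c ∈ s, (A c + min (B c) M)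
      = #s * (2 * M) := by
    rw [← sum_add_distrib, ← sum_add_distrib, sum_const_nat]
    intro c _
    have := hA c
    have := min_le_right (B c) M
    omega
  obtain ⟨βL, hβLs, hβL⟩ := exists_block_coloring s (fun c => M - A c)
    (min_le_right k (∑ c ∈ s, (M - A c)))
  obtain ⟨βT, hβTs, hβT⟩ := exists_block_coloring s (fun c => M - min (B c) M)
    (k := k - min k (∑ c ∈ s, (M - A c))) (by omega)
  refine ⟨βL, βT, _, _, by omega, hβLs, hβTs, fun c => ?_, fun c hc => ?_⟩
  · have := hβL c
    have := hA c
    omega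
  · have := hβT c
    have := min_le_right (B c) M
    omega

def insertBlocks (Δ βL βT : ℕ → ℕ) (p kL n w : ℕ) : ℕ :=
  if w < p then Δ w
  else if w < p + kL then βL (w - p)
  else if w ≤ n + kL then Δ (w - kL)
  else βT (w - (n + kL + 1))

section insertBlocks

variable {Δ βL βT : ℕ → ℕ} {p kL kT n w : ℕ}

lemma insertBlocks_of_lt (h : w < p) : insertBlocks Δ βL βT p kL n w = Δ w := by
  simp [insertBlocks, h]

lemma insertBlocks_of_lowBlock (h₁ : p ≤ w) (h₂ : w < p + kL) :
    insertBlocks Δ βL βT p kL n w = βL (w - p) := by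
  simp [insertBlocks, h₂, h₁.not_gt]

lemma insertBlocks_of_middle (h₁ : p + kL ≤ w) (h₂ : w ≤ n + kL) :
    insertBlocks Δ βL βT p kL n w = Δ (w - kL) := by
  simp [insertBlocks, h₂, h₁.not_gt, (le_of_add_le_left h₁).not_gt]

lemma insertBlocks_of_gt (h₁ : p ≤ n) (h₂ : n + kL < w) :
    insertBlocks Δ βL βT p kL n w = βT (w - (n + kL + 1)) := by
  rw [insertBlocks, if_neg (by omega), if_neg (by omega), if_neg h₂.not_ge]

lemma insertBlocks_mem (C : Finset ℕ) (hΔ : ∀ z ∈ Icc 1 n, Δ z ∈ C) (hβL : ∀ j < kL, βL j ∈ C)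
    (hβT : ∀ j < kT, βT j ∈ C) (hp : 1 ≤ p) (hpn : p ≤ n) :
    ∀ w ∈ Icc 1 (n + kL + kT), insertBlocks Δ βL βT p kL n w ∈ C := by
  intro w hw
  rw [mem_Icc] at hw
  rcases lt_or_ge w p with h₁ | h₁
  · rw [insertBlocks_of_lt h₁]
    exact hΔ w (mem_Icc.2 ⟨hw.1, by omega⟩)
  rcases lt_or_ge w (p + kL) with h₂ | h₂
  · rw [insertBlocks_of_lowBlock h₁ h₂]
    exact hβL _ (by omega)
  rcases le_or_gt w (n + kL) with h₃ | h₃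
  · rw [insertBlocks_of_middle h₂ h₃]
    exact hΔ _ (mem_Icc.2 ⟨by omega, by omega⟩)
  · rw [insertBlocks_of_gt hpn h₃]
    exact hβT _ (by omega)

lemma card_insertBlocks_lt_le {a : ℕ} (hp : 1 ≤ p) (hpa : p ≤ a) (han : a ≤ n) (N c : ℕ) :
    #{w ∈ Icc 1 N | insertBlocks Δ βL βT p kL n w = c ∧ w < a + kL} ≤
      #{z ∈ {w ∈ Icc 1 n | Δ w = c} | z ≤ a - 1} + #{j ∈ range kL | βL j = c} := by
  refine (card_le_card fun w hw => ?_).trans ((card_union_le _ _).trans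
    (add_le_add (card_image_le (f := fun z => if z < p then z else z + kL))
      (card_image_le (f := (· + p)))))
  simp only [mem_filter, mem_Icc, mem_union, mem_image, mem_range] at hw ⊢
  obtain ⟨⟨hw₁, -⟩, hwc, hwa⟩ := hw
  rcases lt_or_ge w p with h₁ | h₁
  · rw [insertBlocks_of_lt h₁] at hwc
    exact Or.inl ⟨w, ⟨⟨⟨hw₁, by omega⟩, hwc⟩, by omega⟩, if_pos h₁⟩
  rcases lt_or_ge w (p + kL) with h₂ | h₂
  · rw [insertBlocks_of_lowBlock h₁ h₂] at hwc
    exact Or.inr ⟨w - p, ⟨by omega, hwc⟩, by omega⟩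
  · rw [insertBlocks_of_middle h₂ (by omega)] at hwc
    refine Or.inl ⟨w - kL, ⟨⟨⟨by omega, by omega⟩, hwc⟩, by omega⟩, ?_⟩
    rw [if_neg (by omega)]
    omega

lemma card_insertBlocks_gt_le {a : ℕ} (hpa : p ≤ a) (han : a ≤ n) (c : ℕ) :
    #{w ∈ Icc 1 (n + kL + kT) | insertBlocks Δ βL βT p kL n w = c ∧ a + kL < w} ≤
      #{z ∈ {w ∈ Icc 1 n | Δ w = c} | a + 1 ≤ z} + #{j ∈ range kT | βT j = c} := by
  refine (card_le_card fun w hw => ?_).trans ((card_union_le _ _).trans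
    (add_le_add (card_image_le (f := (· + kL))) (card_image_le (f := (· + (n + kL + 1))))))
  simp only [mem_filter, mem_Icc, mem_union, mem_image, mem_range] at hw ⊢
  obtain ⟨⟨hw₁, hw₂⟩, hwc, hwa⟩ := hw
  rcases le_or_gt w (n + kL) with h | h
  · rw [insertBlocks_of_middle (by omega) h] at hwc
    exact Or.inl ⟨w - kL, ⟨⟨⟨by omega, by omega⟩, hwc⟩, by omega⟩, by omega⟩
  · rw [insertBlocks_of_gt (by omega) h] at hwc
    exact Or.inr ⟨w - (n + kL + 1), ⟨by omega, hwc⟩, by omega⟩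

lemma IsMonoMSet.sub_of_middle {m : ℕ} {S : Finset ℕ} {x : ℕ → ℕ}
    (hx : IsMonoMSet m (insertBlocks Δ βL βT p kL n) S x) (hp : 1 ≤ p)
    (hmid : ∀ i, 1 ≤ i → i ≤ m → p + kL ≤ x i ∧ x i ≤ n + kL) :
    IsMonoMSet m Δ (Icc 1 n) (fun i => x i - kL) := by
  refine ⟨fun i j hi hij hj => ?_, fun i hi hi' => ?_, fun i hi hi' => ?_⟩ <;> dsimp only
  · have := hx.1 i j hi hij hj
    have := hmid i hi (by omega)
    omega
  · have := hmid i hi hi'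
    exact mem_Icc.2 ⟨by omega, by omega⟩
  · have hi := hmid i hi hi'
    have h₁ := hmid 1 le_rfl (by omega)
    have := hx.2.2 i (by omega) hi'
    rwa [insertBlocks_of_middle hi.1 hi.2, insertBlocks_of_middle h₁.1 h₁.2] at this

theorem not_hasGoodPair_insertBlocks {m a : ℕ} {xs : ℕ → ℕ} (hm : 1 ≤ m)
    (hΔ : ¬HasGoodPair m Δ (Icc 1 n)) (hxs : IsMonoMSet m Δ (Icc 1 n) xs) (hxsa : xs m ≤ a)
    (han : a ≤ n)
    (hL : ∀ c, #{z ∈ {w ∈ Icc 1 n | Δ w = c} | z ≤ a - 1} + #{j ∈ range kL | βL j = c} ≤ m - 1)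
    (hT : ∀ c, 0 < #{j ∈ range kT | βT j = c} →
      #{z ∈ {w ∈ Icc 1 n | Δ w = c} | a + 1 ≤ z} + #{j ∈ range kT | βT j = c} ≤ m - 1) :
    ¬HasGoodPair m (insertBlocks Δ βL βT (xs 1) kL n) (Icc 1 (n + kL + kT)) := by
  rintro ⟨x, y, hx, hy, hxy, hgap⟩
  have hp : 1 ≤ xs 1 := (mem_Icc.1 (hxs.2.1 1 le_rfl hm)).1
  have hxs₁ := hxs.apply_le_apply le_rfl hm le_rfl
  have hx₁ := hx.apply_le_apply le_rfl hm le_rfl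
  have hy₁ := hy.apply_le_apply le_rfl hm le_rfl
  have hxm : a + kL ≤ x m := by
    by_contra! h
    have := ((hx.le_card_filter (· < a + kL) fun i hi hi' =>
      (hx.apply_le_apply hi hi' le_rfl).trans_lt h).trans
        (card_insertBlocks_lt_le hp (by omega) han _ _)).trans (hL _)
    omega
  have hy_gt : ∀ i, 1 ≤ i → i ≤ m → a + kL < y i := fun i hi hi' => by
    have := hy.apply_le_apply le_rfl hi hi'
    omega
  have hy_le : ∀ i, 1 ≤ i → i ≤ m → y i ≤ n + kL := by
    by_contra! ⟨i, hi, hi', h⟩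
    have hyi := mem_Icc.1 (hy.2.1 i hi hi')
    have hc : 0 < #{j ∈ range kT | βT j = insertBlocks Δ βL βT (xs 1) kL n (y 1)} := by
      refine card_pos.2 ⟨y i - (n + kL + 1), mem_filter.2 ⟨mem_range.2 (by omega), ?_⟩⟩
      rw [← hy.2.2 i hi hi']
      exact (insertBlocks_of_gt (by omega) h).symm
    have := ((hy.le_card_filter (a + kL < ·) hy_gt).trans
      (card_insertBlocks_gt_le (by omega) han _)).trans (hT _ hc)
    omega
  have hy' := hy.sub_of_middle hp fun i hi hi' =>
    ⟨by have := hy_gt i hi hi'; omega, hy_le i hi hi'⟩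
  have hym := hy_le m hm le_rfl
  by_cases hx₁ : x 1 < xs 1 + kL
  · exact hΔ ⟨xs, _, hxs, hy', by omega, by omega⟩
  · have hx' := hx.sub_of_middle hp fun i hi hi' =>
      ⟨by have := hx.apply_le_apply le_rfl hi hi'; omega,
        by have := hx.apply_le_apply hi hi' le_rfl; have := hy_le 1 le_rfl hm; omega⟩
    exact hΔ ⟨_, _, hx', hy', by omega, by omega⟩

end insertBlocks

lemma hasGoodPair_g {m r : ℕ} (hg : 0 < g m r) {Δ : ℕ → ℕ}
    (hΔ : ∀ z ∈ Icc 1 (g m r), Δ z ∈ Icc 1 r) : HasGoodPair m Δ (Icc 1 (g m r)) :=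
  Nat.sInf_mem (Nat.nonempty_of_pos_sInf hg) Δ hΔ

lemma card_color_below_le_pred {Δ : ℕ → ℕ} {n r m a : ℕ} (hm : 1 ≤ m)
    (hΔ : ∀ z ∈ Icc 1 n, Δ z ∈ Icc 1 r)
    (hmin : ∀ c ∈ Icc 1 r, ∀ b ∈ {w ∈ Icc 1 n | Δ w = c},
      #{z ∈ {w ∈ Icc 1 n | Δ w = c} | z ≤ b} = m → a ≤ b)
    (c : ℕ) : #{z ∈ {w ∈ Icc 1 n | Δ w = c} | z ≤ a - 1} ≤ m - 1 := by
  by_cases hc : c ∈ Icc 1 r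
  · have := card_filter_lt_lt_of_forall_le hm (hmin c hc)
    refine le_trans (card_le_card fun z hz => ?_) (Nat.le_pred_of_lt this)
    simp only [mem_filter, mem_Icc] at hz ⊢
    exact ⟨hz.1, by omega⟩
  · have : {w ∈ Icc 1 n | Δ w = c} = ∅ :=
      filter_eq_empty_iff.2 fun z hz hzc => hc (hzc ▸ hΔ z hz)
    simp [this]

theorem stmt16_general (m r k : ℕ) (hm : 2 ≤ m)
    (Δ : ℕ → ℕ)
    (hΔ : ∀ z ∈ Finset.Icc 1 (g m r - k), Δ z ∈ Finset.Icc 1 r)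
    (a : ℕ)
    -- `a` is the m-th smallest element of some color class...
    (ha : ∃ c ∈ Finset.Icc 1 r,
      a ∈ (Finset.Icc 1 (g m r - k)).filter (fun z => Δ z = c) ∧
      (((Finset.Icc 1 (g m r - k)).filter (fun z => Δ z = c)).filter
        (fun z => z ≤ a)).card = m)
    -- ...and is minimal among the m-th smallest elements of all color classes
    (ha' : ∀ c ∈ Finset.Icc 1 r, ∀ b,
      b ∈ (Finset.Icc 1 (g m r - k)).filter (fun z => Δ z = c) →
      (((Finset.Icc 1 (g m r - k)).filter (fun z => Δ z = c)).filter
        (fun z => z ≤ b)).card = m → a ≤ b)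
    (hsum : ∑ c ∈ Finset.Icc 1 r,
        ((((Finset.Icc 1 (g m r - k)).filter (fun z => Δ z = c)).filter
            (fun z => z ≤ a - 1)).card +
          min ((((Finset.Icc 1 (g m r - k)).filter (fun z => Δ z = c)).filter
            (fun z => a + 1 ≤ z)).card) (m - 1)) ≤
      r * (2 * m - 2) - k) :
    HasGoodPair m Δ (Finset.Icc 1 (g m r - k)) := by
  by_contra hgood
  obtain ⟨cs, hcs, ha_mem, ha_card⟩ := ha
  set n := g m r - k
  have ha_n := mem_Icc.1 (mem_filter.1 ha_mem).1
  have hA := card_color_below_le_pred (by omega) hΔ ha'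
  obtain ⟨xs, hxs, hxs_mem⟩ := exists_isMonoMSet_of_card_eq_s16
    ((filter_subset _ _).trans (filter_subset _ _))
    (fun w hw => (mem_filter.1 (mem_filter.1 hw).1).2) ha_card
  have hAcs := ha_card ▸ card_filter_le_le_card_filter_le_pred_add_one {w ∈ Icc 1 n | Δ w = cs} a
  have hpos := single_le_sum (f := fun c => #{z ∈ {w ∈ Icc 1 n | Δ w = c} | z ≤ a - 1} +
    min #{z ∈ {w ∈ Icc 1 n | Δ w = c} | a + 1 ≤ z} (m - 1)) (fun _ _ => Nat.zero_le _) hcs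
  obtain ⟨βL, βT, kL, kT, hk, hβL, hβT, hL, hT⟩ := exists_insertion_blocks (Icc 1 r)
    (fun c => #{z ∈ {w ∈ Icc 1 n | Δ w = c} | z ≤ a - 1})
    (fun c => #{z ∈ {w ∈ Icc 1 n | Δ w = c} | a + 1 ≤ z}) hA (k := k) (by
      rw [Nat.card_Icc, Nat.add_sub_cancel, show 2 * (m - 1) = 2 * m - 2 by omega]
      omega)
  have hxs₁ := mem_Icc.1 (hxs.2.1 1 le_rfl (by omega))
  have hg : g m r = n + kL + kT := by omega
  refine not_hasGoodPair_insertBlocks (by omega) hgood hxs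
    (mem_filter.1 (hxs_mem m (by omega) le_rfl)).2 ha_n.2 hL hT ?_
  rw [← hg]
  exact hasGoodPair_g (by omega) (hg ▸ insertBlocks_mem _ hΔ hβL hβT hxs₁.1 hxs₁.2)

theorem stmt16 (m r k : ℕ) (hm : 2 ≤ m) (hr : 1 ≤ r) (hk : 1 ≤ k)
    (Δ : ℕ → ℕ)
    (hΔ : ∀ z ∈ Finset.Icc 1 (g m r - k), Δ z ∈ Finset.Icc 1 r)
    (a : ℕ)
    -- `a` is the m-th smallest element of some color class...
    (ha : ∃ c ∈ Finset.Icc 1 r,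
      a ∈ (Finset.Icc 1 (g m r - k)).filter (fun z => Δ z = c) ∧
      (((Finset.Icc 1 (g m r - k)).filter (fun z => Δ z = c)).filter
        (fun z => z ≤ a)).card = m)
    -- ...and is minimal among the m-th smallest elements of all color classes
    (ha' : ∀ c ∈ Finset.Icc 1 r, ∀ b,
      b ∈ (Finset.Icc 1 (g m r - k)).filter (fun z => Δ z = c) →
      (((Finset.Icc 1 (g m r - k)).filter (fun z => Δ z = c)).filter
        (fun z => z ≤ b)).card = m → a ≤ b)
    (hsum : ∑ c ∈ Finset.Icc 1 r,
        ((((Finset.Icc 1 (g m r - k)).filter (fun z => Δ z = c)).filter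
            (fun z => z ≤ a - 1)).card +
          min ((((Finset.Icc 1 (g m r - k)).filter (fun z => Δ z = c)).filter
            (fun z => a + 1 ≤ z)).card) (m - 1)) ≤
      r * (2 * m - 2) - k) :
    HasGoodPair m Δ (Finset.Icc 1 (g m r - k)) :=
  stmt16_general m r k hm Δ hΔ a ha ha' hsum
end
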